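/- Shift identity for glued hyperideal triangles: consider two hyperideal triangles x₁x₂x₃ and x₁x₃x₄ with disjoint interiors sharing the edge (x₁,x₃), whose endpoints are ideal. For each vertex xᵢ choose hᵢ = a horocycle centered at xᵢ if xᵢ is ideal, or the dual geodesic of xᵢ if xᵢ is strictly hyperideal, and let l_{ij} be the signed distance between hᵢ and hⱼ along the geodesic from xᵢ to xⱼ. Let δ be the signed distance along the geodesic (x₃,x₁) between the orthogonal projections of x₂ and x₄ onto it. Then 2δ = l₁₂ − l₂₃ + l₃₄ − l₄₁. -/
import Mathlib


/-- The Minkowski bilinear form on `ℝ³` (signature `(-,+,+)`). -/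
def mk3 (x y : Fin 3 → ℝ) : ℝ := -(x 0 * y 0) + x 1 * y 1 + x 2 * y 2

/-- The signed distance, along the connecting geodesic, from the horocycle encoded by
the future null vector `u` to the decoration of a second vertex encoded by `h`:
a horocycle if `h` is null (`d = log(-⟨u,h⟩/2)`), or the dual geodesic of a strictly
hyperideal vertex if `h` is a unit space-like vector (`d = log |⟨u,h⟩|`). -/
noncomputable def ldist (u h : Fin 3 → ℝ) : ℝ :=
  if mk3 h h = 0 then Real.log (-(mk3 u h) / 2) else Real.log |mk3 u h|

/-- The parameter along the geodesic with ideal endpoints `[u1]`, `[u3]` (parametrized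
by arclength `s` via `γ(s) ∝ e^s u1 + e^{-s} u3`) of the orthogonal projection onto
this geodesic of the vertex encoded by `h`. -/
noncomputable def foot (u1 u3 h : Fin 3 → ℝ) : ℝ :=
  (1 / 2) * Real.log (|mk3 u3 h| / |mk3 u1 h|)

lemma null_pair_neg (u h : Fin 3 → ℝ) (hu : mk3 u u = 0) (hut : 0 < u 0)
    (hh : mk3 h h = 0) (hht : 0 < h 0) (hne : mk3 u h ≠ 0) : mk3 u h < 0 := by
  have hle : mk3 u h ≤ 0 := by
    unfold mk3 at *
    nlinarith [sq_nonneg (u 1 * h 2 - u 2 * h 1), mul_pos hut hht,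
      sq_nonneg (u 1 * h 1 + u 2 * h 2 + u 0 * h 0)]
  exact lt_of_le_of_ne hle hne

lemma ldist_diff (u1 u3 h : Fin 3 → ℝ)
    (hu1 : mk3 u1 u1 = 0) (hu1t : 0 < u1 0)
    (hu3 : mk3 u3 u3 = 0) (hu3t : 0 < u3 0)
    (hh : (mk3 h h = 0 ∧ 0 < h 0) ∨ mk3 h h = 1)
    (h1 : mk3 u1 h ≠ 0) (h3 : mk3 u3 h ≠ 0) :
    ldist u1 h - ldist u3 h = Real.log |mk3 u1 h| - Real.log |mk3 u3 h| := by
  rcases hh with ⟨hh0, hht⟩ | hh1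
  · have a1 := null_pair_neg u1 h hu1 hu1t hh0 hht h1
    have a3 := null_pair_neg u3 h hu3 hu3t hh0 hht h3
    unfold ldist
    rw [if_pos hh0, if_pos hh0,
      Real.log_div (by linarith) two_ne_zero,
      Real.log_div (by linarith) two_ne_zero,
      abs_of_neg a1, abs_of_neg a3]
    ring
  · unfold ldist
    rw [if_neg (by rw [hh1]; norm_num), if_neg (by rw [hh1]; norm_num)]

/-- Shift identity for glued hyperideal triangles: let `x₁ x₂ x₃` and `x₁ x₃ x₄` be two
hyperideal triangles with disjoint interiors sharing the edge `(x₁, x₃)` whose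
endpoints are ideal. Encode the ideal vertices `x₁, x₃` with chosen horocycles by
future-pointing null vectors `u1, u3` of Minkowski 3-space, and the vertices `x₂, x₄`
(with chosen horocycle or dual geodesic) by vectors `h2, h4`, each either future null
or unit space-like; the disjointness of the interiors is encoded by `h2`, `h4` lying on
opposite sides of the Minkowski plane spanned by `u1, u3` (witnessed by a vector `w`
orthogonal to both `u1` and `u3`). Then, with `δ` the signed distance along `(x₃,x₁)`
between the orthogonal projections of `x₂` and `x₄`,
`2δ = l₁₂ - l₂₃ + l₃₄ - l₄₁`. -/
theorem stmt_16 (u1 u3 h2 h4 w : Fin 3 → ℝ)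
    (hu1 : mk3 u1 u1 = 0) (hu1t : 0 < u1 0)
    (hu3 : mk3 u3 u3 = 0) (hu3t : 0 < u3 0)
    (h13 : mk3 u1 u3 < 0)
    (hh2 : (mk3 h2 h2 = 0 ∧ 0 < h2 0) ∨ mk3 h2 h2 = 1)
    (hh4 : (mk3 h4 h4 = 0 ∧ 0 < h4 0) ∨ mk3 h4 h4 = 1)
    (h12 : mk3 u1 h2 ≠ 0) (h32 : mk3 u3 h2 ≠ 0)
    (h14 : mk3 u1 h4 ≠ 0) (h34 : mk3 u3 h4 ≠ 0)
    (hw1 : mk3 w u1 = 0) (hw3 : mk3 w u3 = 0)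
    (hw2 : 0 < mk3 w h2) (hw4 : mk3 w h4 < 0) :
    2 * (foot u1 u3 h4 - foot u1 u3 h2) =
      ldist u1 h2 - ldist u3 h2 + ldist u3 h4 - ldist u1 h4 := by
  have e2 := ldist_diff u1 u3 h2 hu1 hu1t hu3 hu3t hh2 h12 h32
  have e4 := ldist_diff u1 u3 h4 hu1 hu1t hu3 hu3t hh4 h14 h34
  unfold foot
  rw [Real.log_div (abs_ne_zero.mpr h34) (abs_ne_zero.mpr h14),
      Real.log_div (abs_ne_zero.mpr h32) (abs_ne_zero.mpr h12)]
  linarith
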